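/- For every fixed z > 0, the function ν ↦ K_ν(z) is log-convex on ℝ; that is, ν ↦ log K_ν(z) is a convex function of ν. In particular, K_{(μ+ν)/2}(z)² ≤ K_μ(z) · K_ν(z) for all real μ, ν. -/

import Mathlib

/-!
`K_ν(z)` is half the Mellin transform, at `ν`, of the positive weight
`w(t) = exp(-z(t + 1/t)/2)`. Since `w(1/t) = w(t)` and `w` decays exponentially at `∞`, it is
`O(t^a)` at both ends for every `a`, so the transform converges for all real `ν`.
Writing `t^(aμ+bν-1) w = (t^(μ-1) w)^a (t^(ν-1) w)^b` and applying Hölder's inequality with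
exponents `1/a`, `1/b` gives `K_{aμ+bν}(z) ≤ K_μ(z)^a K_ν(z)^b`, which is log-convexity;
`a = b = 1/2` is the midpoint inequality.
-/

/-- The modified Bessel function of the second kind,
`K_ν(z) = (1/2) ∫_0^∞ t^{ν-1} exp(-z(t + 1/t)/2) dt`. -/
noncomputable def besselK (ν z : ℝ) : ℝ :=
  (1 / 2) * ∫ t in Set.Ioi (0 : ℝ), t ^ (ν - 1) * Real.exp (-z * (t + 1 / t) / 2)

open Filter Set MeasureTheory Real Asymptotics
open scoped Topology

section Holder

variable {α : Type*} [MeasurableSpace α] {μ : Measure α} {f g : α → ℝ}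

theorem memLp_rpow_of_integrable (hf : 0 ≤ᵐ[μ] f) (hfi : Integrable f μ) {a : ℝ} (ha : 0 < a) :
    MemLp (fun x => f x ^ a) (ENNReal.ofReal (1 / a)) μ := by
  have hp : ENNReal.ofReal (1 / a) ≠ 0 := by simpa using ha
  rw [← memLp_norm_rpow_iff (hfi.aemeasurable.pow_const a).aestronglyMeasurable hp
    ENNReal.ofReal_ne_top, ENNReal.toReal_ofReal (by positivity),
    ENNReal.div_self hp ENNReal.ofReal_ne_top, memLp_one_iff_integrable]
  refine hfi.congr ?_
  filter_upwards [hf] with x hx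
  rw [norm_of_nonneg (rpow_nonneg hx a), ← rpow_mul hx, mul_one_div_cancel ha.ne', rpow_one]

theorem integral_rpow_mul_rpow_le (hf : 0 ≤ᵐ[μ] f) (hg : 0 ≤ᵐ[μ] g) (hfi : Integrable f μ)
    (hgi : Integrable g μ) {a b : ℝ} (ha : 0 < a) (hb : 0 < b) (hab : a + b = 1) :
    ∫ x, f x ^ a * g x ^ b ∂μ ≤ (∫ x, f x ∂μ) ^ a * (∫ x, g x ∂μ) ^ b := by
  have hf' : ∀ᵐ x ∂μ, (f x ^ a) ^ (1 / a) = f x := by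
    filter_upwards [hf] with x hx
    rw [← rpow_mul hx, mul_one_div_cancel ha.ne', rpow_one]
  have hg' : ∀ᵐ x ∂μ, (g x ^ b) ^ (1 / b) = g x := by
    filter_upwards [hg] with x hx
    rw [← rpow_mul hx, mul_one_div_cancel hb.ne', rpow_one]
  have := integral_mul_le_Lp_mul_Lq_of_nonneg (holderConjugate_one_div ha hb hab)
    (hf.mono fun x hx => rpow_nonneg hx a) (hg.mono fun x hx => rpow_nonneg hx b)
    (memLp_rpow_of_integrable hf hfi ha) (memLp_rpow_of_integrable hg hgi hb)
  rwa [integral_congr_ae hf', integral_congr_ae hg', one_div_one_div, one_div_one_div] at this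

end Holder

theorem convexOn_log_comp_of_le_rpow_mul_rpow {E : Type*} [AddCommMonoid E] [Module ℝ E]
    {s : Set E} {f : E → ℝ} (hs : Convex ℝ s) (hf : ∀ x ∈ s, 0 < f x)
    (h : ∀ x ∈ s, ∀ y ∈ s, ∀ a b : ℝ, 0 < a → 0 < b → a + b = 1 →
      f (a • x + b • y) ≤ f x ^ a * f y ^ b) :
    ConvexOn ℝ s (log ∘ f) := by
  refine convexOn_iff_forall_pos.mpr ⟨hs, fun x hx y hy a b ha hb hab => ?_⟩
  have hfx := hf x hx
  have hfy := hf y hy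
  simp only [Function.comp_apply, smul_eq_mul]
  rw [← log_rpow hfx, ← log_rpow hfy, ← log_mul (by positivity) (by positivity)]
  exact log_le_log (hf _ (hs hx hy ha.le hb.le hab)) (h x hx y hy a b ha hb hab)

theorem integral_Ioi_rpow_mul_add_mul_le {f : ℝ → ℝ} (hf : ∀ t ∈ Ioi (0 : ℝ), 0 ≤ f t) {μ ν : ℝ}
    (hμ : IntegrableOn (fun t => t ^ (μ - 1) * f t) (Ioi 0))
    (hν : IntegrableOn (fun t => t ^ (ν - 1) * f t) (Ioi 0))
    {a b : ℝ} (ha : 0 < a) (hb : 0 < b) (hab : a + b = 1) :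
    ∫ t in Ioi 0, t ^ (a * μ + b * ν - 1) * f t ≤
      (∫ t in Ioi 0, t ^ (μ - 1) * f t) ^ a * (∫ t in Ioi 0, t ^ (ν - 1) * f t) ^ b := by
  have hnonneg : ∀ κ : ℝ, 0 ≤ᵐ[volume.restrict (Ioi 0)] fun t => t ^ (κ - 1) * f t := fun κ =>
    ae_restrict_of_forall_mem measurableSet_Ioi fun t ht =>
      mul_nonneg (rpow_nonneg (le_of_lt ht) _) (hf t ht)
  refine le_trans (le_of_eq (setIntegral_congr_fun measurableSet_Ioi fun t ht => ?_))
    (integral_rpow_mul_rpow_le (hnonneg μ) (hnonneg ν) hμ hν ha hb hab)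
  have ht : (0 : ℝ) < t := ht
  have hft := hf t ht
  rw [mul_rpow (rpow_nonneg ht.le _) hft, mul_rpow (rpow_nonneg ht.le _) hft,
    ← rpow_mul ht.le, ← rpow_mul ht.le, mul_mul_mul_comm, ← rpow_add ht,
    ← rpow_add' hft (by rw [hab]; exact one_ne_zero), hab, rpow_one]
  congr 2
  linear_combination hab

noncomputable def besselKWeight (z t : ℝ) : ℝ :=
  Real.exp (-z * (t + 1 / t) / 2)

theorem besselKWeight_pos (z t : ℝ) : 0 < besselKWeight z t := exp_pos _

theorem besselKWeight_inv (z t : ℝ) : besselKWeight z t⁻¹ = besselKWeight z t := by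
  rw [besselKWeight, besselKWeight, one_div, one_div, inv_inv, add_comm]

theorem besselKWeight_le_exp {z t : ℝ} (hz : 0 ≤ z) (ht : 0 < t) :
    besselKWeight z t ≤ exp (-(z / 2) * t) := by
  have : 0 ≤ z * (1 / t) := by positivity
  exact exp_le_exp.mpr (by linarith)

theorem isBigO_besselKWeight_atTop {z : ℝ} (hz : 0 < z) (a : ℝ) :
    besselKWeight z =O[atTop] (· ^ (-a)) := by
  refine IsBigO.trans ?_ (isLittleO_exp_neg_mul_rpow_atTop (half_pos hz) (-a)).isBigO
  refine IsBigO.of_bound 1 ((eventually_gt_atTop 0).mono fun t ht => ?_)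
  rw [one_mul, norm_of_nonneg (besselKWeight_pos z t).le, norm_of_nonneg (exp_pos _).le]
  exact besselKWeight_le_exp hz.le ht

theorem isBigO_besselKWeight_nhdsGT_zero {z : ℝ} (hz : 0 < z) (b : ℝ) :
    besselKWeight z =O[𝓝[>] 0] (· ^ (-b)) := by
  have h := (isBigO_besselKWeight_atTop hz (-b)).comp_tendsto tendsto_inv_nhdsGT_zero
  refine h.congr' (Eventually.of_forall fun t => besselKWeight_inv z t) ?_
  filter_upwards [self_mem_nhdsWithin] with t (ht : 0 < t)
  rw [Function.comp_apply, neg_neg, inv_rpow ht.le, rpow_neg ht.le]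

theorem integrableOn_rpow_mul_besselKWeight {z : ℝ} (hz : 0 < z) (ν : ℝ) :
    IntegrableOn (fun t => t ^ (ν - 1) * besselKWeight z t) (Ioi 0) :=
  mellin_convergent_of_isBigO_scalar
    ((continuousOn_of_forall_continuousAt fun t ht => by
      unfold besselKWeight; fun_prop (disch := exact (mem_Ioi.mp ht).ne')).locallyIntegrableOn
      measurableSet_Ioi)
    (isBigO_besselKWeight_atTop hz (ν + 1)) (lt_add_one ν)
    (isBigO_besselKWeight_nhdsGT_zero hz (ν - 1)) (sub_one_lt ν)

theorem besselK_eq_integral (ν z : ℝ) :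
    besselK ν z = 1 / 2 * ∫ t in Ioi 0, t ^ (ν - 1) * besselKWeight z t := rfl

theorem besselK_pos {z : ℝ} (hz : 0 < z) (ν : ℝ) : 0 < besselK ν z := by
  rw [besselK_eq_integral]
  refine mul_pos one_half_pos ((setIntegral_pos_iff_support_of_nonneg_ae ?_
    (integrableOn_rpow_mul_besselKWeight hz ν)).mpr ?_)
  · exact ae_restrict_of_forall_mem measurableSet_Ioi fun t ht =>
      (mul_pos (rpow_pos_of_pos ht _) (besselKWeight_pos z t)).le
  · have : Function.support (fun t => t ^ (ν - 1) * besselKWeight z t) ∩ Ioi 0 = Ioi 0 :=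
      inter_eq_right.mpr fun t ht => (mul_pos (rpow_pos_of_pos ht _) (besselKWeight_pos z t)).ne'
    rw [this]
    simp

theorem besselK_mul_add_mul_le {z : ℝ} (hz : 0 < z) (μ ν : ℝ) {a b : ℝ} (ha : 0 < a)
    (hb : 0 < b) (hab : a + b = 1) :
    besselK (a * μ + b * ν) z ≤ besselK μ z ^ a * besselK ν z ^ b := by
  have hint := integral_Ioi_rpow_mul_add_mul_le (fun t _ => (besselKWeight_pos z t).le)
    (integrableOn_rpow_mul_besselKWeight hz μ) (integrableOn_rpow_mul_besselKWeight hz ν)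
    ha hb hab
  have hhalf : (1 / 2 : ℝ) = (1 / 2) ^ a * (1 / 2) ^ b := by
    rw [← rpow_add one_half_pos, hab, rpow_one]
  have hnonneg : ∀ κ : ℝ, 0 ≤ ∫ t in Ioi 0, t ^ (κ - 1) * besselKWeight z t := fun κ =>
    setIntegral_nonneg measurableSet_Ioi fun t ht =>
      mul_nonneg (rpow_nonneg (le_of_lt ht) _) (besselKWeight_pos z t).le
  simp only [besselK_eq_integral]
  rw [mul_rpow one_half_pos.le (hnonneg μ), mul_rpow one_half_pos.le (hnonneg ν),
    mul_mul_mul_comm, ← hhalf]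
  exact mul_le_mul_of_nonneg_left hint one_half_pos.le

theorem convexOn_log_besselK {z : ℝ} (hz : 0 < z) :
    ConvexOn ℝ univ (fun ν => log (besselK ν z)) :=
  convexOn_log_comp_of_le_rpow_mul_rpow (f := (besselK · z)) convex_univ
    (fun ν _ => besselK_pos hz ν)
    (fun μ _ ν _ _ _ ha hb hab => besselK_mul_add_mul_le hz μ ν ha hb hab)

theorem besselK_midpoint_sq_le {z : ℝ} (hz : 0 < z) (μ ν : ℝ) :
    besselK ((μ + ν) / 2) z ^ 2 ≤ besselK μ z * besselK ν z := by
  have h := besselK_mul_add_mul_le hz μ ν one_half_pos one_half_pos (add_halves 1)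
  rw [← sqrt_eq_rpow, ← sqrt_eq_rpow, ← sqrt_mul (besselK_pos hz μ).le,
    show 1 / 2 * μ + 1 / 2 * ν = (μ + ν) / 2 by ring] at h
  exact (le_sqrt' (besselK_pos hz _)).mp h

theorem stmt_18 (z : ℝ) (hz : 0 < z) :
    ConvexOn ℝ Set.univ (fun ν : ℝ => Real.log (besselK ν z)) ∧
      ∀ μ ν : ℝ, besselK ((μ + ν) / 2) z ^ 2 ≤ besselK μ z * besselK ν z :=
  ⟨convexOn_log_besselK hz, besselK_midpoint_sq_le hz⟩
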